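/- arXiv:2204.10132 — 4 statements merged into one kernel-verified Lean document; each statement's English description precedes it below -/
import Mathlib

section
/- Let m and n be positive integers and let a be a nonzero rational number. Then ∑_{k=0}^{n−1} binom(a,k)^m · ∑_{r=0}^{⌊(m−1)/2⌋} C(m,2r+1) (1 − (2/a)k)^{2r+1} = 2^{m−1} binom(a−1, n−1)^m, and ∑_{k=0}^{n−1} (−1)^k binom(a,k)^m · ∑_{r=0}^{⌊m/2⌋} C(m,2r) (1 − (2/a)k)^{2r} = 2^{m−1} (−1)^{n−1} binom(a−1, n−1)^m. -/
/-- The generalized binomial coefficient `a(a-1)⋯(a-k+1)/k!` for a rational `a`. -/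
def ratBinom (a : ℚ) (k : ℕ) : ℚ := (∏ i ∈ Finset.range k, (a - i)) / (Nat.factorial k : ℚ)

/-- `x` is a `p`-adic integer: the denominator of the reduced fraction is not divisible by `p`. -/
def isPInt (p : ℕ) (x : ℚ) : Prop := ¬ p ∣ x.den

/-- `x ≡ y (mod p^m)` for rationals that are `p`-adic integers. -/
def ratModEq (p m : ℕ) (x y : ℚ) : Prop := isPInt p ((x - y) / (p : ℚ) ^ m)

/-- The harmonic number `H_n = 1 + 1/2 + ⋯ + 1/n`. -/
def harm (n : ℕ) : ℚ := ∑ i ∈ Finset.range n, (1 : ℚ) / (i + 1)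

/-- `H_n^{(2)} = 1 + 1/2² + ⋯ + 1/n²`. -/
def harm2 (n : ℕ) : ℚ := ∑ i ∈ Finset.range n, (1 : ℚ) / ((i : ℚ) + 1) ^ 2

/-- The even-indexed Euler numbers: `eulerEven n = E_{2n}`, satisfying
`E_0 = 1` and `E_{2n} = -∑_{k=1}^{n} C(2n,2k) E_{2n-2k}` for `n ≥ 1`. -/
def eulerEven : ℕ → ℚ :=
  WellFounded.fix Nat.lt_wfRel.wf fun n eulerEven =>
    if n = 0 then 1
    else -∑ k : Fin n, ((2 * n).choose (2 * (k : ℕ)) : ℚ) * eulerEven k k.2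

/-- The Euler numbers `E_n`: `E_0 = 1`, `E_{2n-1} = 0`,
`E_{2n} = -∑_{k=1}^{n} C(2n,2k) E_{2n-2k}`. -/
def eulerNumber (n : ℕ) : ℚ := if n % 2 = 0 then eulerEven (n / 2) else 0

/-- The Euler polynomial `E_n(x) = 2^{-n} ∑_{k=0}^{n} C(n,k) (2x-1)^{n-k} E_k`. -/
def eulerPoly (n : ℕ) (x : ℚ) : ℚ :=
  (∑ k ∈ Finset.range (n + 1), (n.choose k : ℚ) * (2 * x - 1) ^ (n - k) * eulerNumber k) / 2 ^ n

/-- Even-indexed part of the sequence `U_n`: `uEven n = U_{2n}`, with `U_0 = 1` and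
`U_{2n} = -2∑_{k=1}^{n} C(2n,2k) U_{2n-2k}` for `n ≥ 1`. -/
def uEven : ℕ → ℚ :=
  WellFounded.fix Nat.lt_wfRel.wf fun n uEven =>
    if n = 0 then 1
    else -2 * ∑ k : Fin n, ((2 * n).choose (2 * (k : ℕ)) : ℚ) * uEven k k.2

/-- The sequence `U_n`: `U_0 = 1`, `U_{2n-1} = 0`, `U_{2n} = -2∑_{k=1}^{n} C(2n,2k) U_{2n-2k}`. -/
def uSeq (n : ℕ) : ℚ := if n % 2 = 0 then uEven (n / 2) else 0

/-!
Put `x_k = 1 - 2k/a`, `u_k = binom(a,k)(a-k)/a = binom(a-1,k)` and `v_k = binom(a,k) k/a`, so that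
`binom(a,k)(1 + x_k) = 2u_k`, `binom(a,k)(1 - x_k) = 2v_k`, `v_0 = 0` and `v_{k+1} = u_k`.
The inner sums are the odd and even parts `((1+x)^m ∓ (1-x)^m)/2` of the binomial expansion of
`(1+x)^m`, so the `k`-th summands are `2^{m-1}(u_k^m - v_k^m)` and `2^{m-1}(-1)^k(u_k^m + v_k^m)`.
Both sums telescope, to `2^{m-1} v_n^m` and `2^{m-1}(-1)^{n-1} v_n^m`, and `v_n = binom(a-1,n-1)`.
-/

open Finset

section ParityParts

variable {R : Type*} [CommRing R]

theorem one_add_pow_add_mul_one_sub_pow (x c : R) (m : ℕ) :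
    (1 + x) ^ m + c * (1 - x) ^ m =
      ∑ j ∈ range (m + 1), (1 + c * (-1) ^ j) * ((m.choose j : R) * x ^ j) := by
  rw [add_comm 1 x, sub_eq_neg_add, add_pow, add_pow, mul_sum, ← sum_add_distrib]
  refine sum_congr rfl fun j _ ↦ ?_
  rw [neg_pow]
  simp only [one_pow, mul_one]
  ring

theorem sum_range_filter_even {M : Type*} [AddCommMonoid M] (f : ℕ → M) (m : ℕ) :
    ∑ j ∈ range (m + 1) with Even j, f j = ∑ r ∈ range (m / 2 + 1), f (2 * r) := by
  refine sum_nbij' (· / 2) (2 * ·) ?_ ?_ ?_ ?_ ?_ <;>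
    intro j hj <;> simp only [mem_filter, mem_range, Nat.even_iff] at hj ⊢ <;>
    first | omega | (congr 1; omega)

theorem sum_range_filter_odd {M : Type*} [AddCommMonoid M] (f : ℕ → M) {m : ℕ} (hm : 0 < m) :
    ∑ j ∈ range (m + 1) with Odd j, f j = ∑ r ∈ range ((m - 1) / 2 + 1), f (2 * r + 1) := by
  refine sum_nbij' (· / 2) (2 * · + 1) ?_ ?_ ?_ ?_ ?_ <;>
    intro j hj <;> simp only [mem_filter, mem_range, Nat.odd_iff] at hj ⊢ <;>
    first | omega | (congr 1; omega)

theorem two_mul_sum_choose_even_mul_pow (m : ℕ) (x : R) :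
    2 * ∑ r ∈ range (m / 2 + 1), (m.choose (2 * r) : R) * x ^ (2 * r) =
      (1 + x) ^ m + (1 - x) ^ m := by
  rw [← one_mul ((1 - x) ^ m), one_add_pow_add_mul_one_sub_pow,
    ← sum_range_filter_even (fun j ↦ (m.choose j : R) * x ^ j), mul_sum, sum_filter]
  refine sum_congr rfl fun j _ ↦ ?_
  split_ifs with hj
  · rw [hj.neg_one_pow]; ring
  · rw [(Nat.not_even_iff_odd.1 hj).neg_one_pow]; ring

theorem two_mul_sum_choose_odd_mul_pow {m : ℕ} (hm : 0 < m) (x : R) :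
    2 * ∑ r ∈ range ((m - 1) / 2 + 1), (m.choose (2 * r + 1) : R) * x ^ (2 * r + 1) =
      (1 + x) ^ m - (1 - x) ^ m := by
  rw [sub_eq_add_neg, neg_eq_neg_one_mul, one_add_pow_add_mul_one_sub_pow,
    ← sum_range_filter_odd (fun j ↦ (m.choose j : R) * x ^ j) hm, mul_sum, sum_filter]
  refine sum_congr rfl fun j _ ↦ ?_
  split_ifs with hj
  · rw [hj.neg_one_pow]; ring
  · rw [(Nat.not_odd_iff_even.1 hj).neg_one_pow]; ring

theorem sum_range_neg_one_pow_mul_succ_add (f : ℕ → R) (n : ℕ) :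
    ∑ k ∈ range n, (-1) ^ k * (f (k + 1) + f k) = f 0 - (-1) ^ n * f n := by
  induction n with
  | zero => simp
  | succ n ih => rw [sum_range_succ, ih, pow_succ]; ring

end ParityParts

theorem ratBinom_mul_sub_div {a : ℚ} (ha : a ≠ 0) (k : ℕ) :
    ratBinom a k * ((a - k) / a) = ratBinom (a - 1) k := by
  have hprod : (∏ i ∈ range k, (a - i)) * (a - k) = a * ∏ i ∈ range k, (a - 1 - i) := by
    rw [← prod_range_succ, prod_range_succ', mul_comm]
    push_cast
    simp only [sub_zero, sub_sub, add_comm (1 : ℚ)]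
  rw [ratBinom, ratBinom, div_mul_div_comm, hprod, mul_comm _ a, mul_div_mul_left _ _ ha]

theorem ratBinom_succ_mul_div {a : ℚ} (ha : a ≠ 0) (k : ℕ) :
    ratBinom a (k + 1) * ((k + 1 : ℕ) / a) = ratBinom (a - 1) k := by
  have hprod : ∏ i ∈ range (k + 1), (a - i) = a * ∏ i ∈ range k, (a - 1 - i) := by
    rw [prod_range_succ', mul_comm]
    push_cast
    simp only [sub_zero, sub_sub, add_comm (1 : ℚ)]
  rw [ratBinom, ratBinom, hprod, Nat.factorial_succ]
  push_cast
  field_simp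

section Terms

variable {m : ℕ} {a : ℚ}

theorem ratBinom_pow_mul_sum_choose_odd (hm : 0 < m) (ha : a ≠ 0) (k : ℕ) :
    ratBinom a k ^ m * ∑ r ∈ range ((m - 1) / 2 + 1),
        (m.choose (2 * r + 1) : ℚ) * (1 - 2 / a * k) ^ (2 * r + 1) =
      2 ^ (m - 1) * ((ratBinom a k * ((a - k) / a)) ^ m - (ratBinom a k * (k / a)) ^ m) := by
  have hx := two_mul_sum_choose_odd_mul_pow hm (1 - 2 / a * k)
  rw [show 1 + (1 - 2 / a * k) = 2 * ((a - k) / a) by field_simp; ring,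
    show 1 - (1 - 2 / a * k) = 2 * (k / a) by ring, mul_pow, mul_pow] at hx
  obtain ⟨m, rfl⟩ := Nat.exists_eq_add_one_of_ne_zero hm.ne'
  rw [Nat.add_sub_cancel] at hx ⊢
  generalize (a - k) / a = u at hx ⊢
  generalize (k : ℚ) / a = w at hx ⊢
  linear_combination (ratBinom a k ^ (m + 1) / 2) * hx

theorem ratBinom_pow_mul_sum_choose_even (hm : 0 < m) (ha : a ≠ 0) (k : ℕ) :
    ratBinom a k ^ m * ∑ r ∈ range (m / 2 + 1),
        (m.choose (2 * r) : ℚ) * (1 - 2 / a * k) ^ (2 * r) =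
      2 ^ (m - 1) * ((ratBinom a k * ((a - k) / a)) ^ m + (ratBinom a k * (k / a)) ^ m) := by
  have hx := two_mul_sum_choose_even_mul_pow m (1 - 2 / a * k)
  rw [show 1 + (1 - 2 / a * k) = 2 * ((a - k) / a) by field_simp; ring,
    show 1 - (1 - 2 / a * k) = 2 * (k / a) by ring, mul_pow, mul_pow] at hx
  obtain ⟨m, rfl⟩ := Nat.exists_eq_add_one_of_ne_zero hm.ne'
  rw [Nat.add_sub_cancel]
  generalize (a - k) / a = u at hx ⊢
  generalize (k : ℚ) / a = w at hx ⊢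
  linear_combination (ratBinom a k ^ (m + 1) / 2) * hx

end Terms

theorem stmt0 (m n : ℕ) (hm : 0 < m) (hn : 0 < n) (a : ℚ) (ha : a ≠ 0) :
    (∑ k ∈ Finset.range n, ratBinom a k ^ m *
        ∑ r ∈ Finset.range ((m - 1) / 2 + 1),
          (m.choose (2 * r + 1) : ℚ) * (1 - 2 / a * k) ^ (2 * r + 1)) =
      2 ^ (m - 1) * ratBinom (a - 1) (n - 1) ^ m ∧
    (∑ k ∈ Finset.range n, (-1 : ℚ) ^ k * ratBinom a k ^ m *
        ∑ r ∈ Finset.range (m / 2 + 1),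
          (m.choose (2 * r) : ℚ) * (1 - 2 / a * k) ^ (2 * r)) =
      2 ^ (m - 1) * (-1 : ℚ) ^ (n - 1) * ratBinom (a - 1) (n - 1) ^ m := by
  set v : ℕ → ℚ := fun k ↦ (ratBinom a k * (k / a)) ^ m with hv
  have hu (k : ℕ) : (ratBinom a k * ((a - k) / a)) ^ m = v (k + 1) := by
    rw [ratBinom_mul_sub_div ha, hv, ← ratBinom_succ_mul_div ha]
  have hv0 : v 0 = 0 := by simp [hv, hm.ne']
  obtain ⟨n, rfl⟩ := Nat.exists_eq_add_one_of_ne_zero hn.ne'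
  have hvn : v (n + 1) = ratBinom (a - 1) n ^ m := by rw [← hu, ratBinom_mul_sub_div ha]
  constructor
  · simp_rw [ratBinom_pow_mul_sum_choose_odd hm ha, hu]
    rw [← mul_sum, sum_range_sub v, hv0, hvn, sub_zero, Nat.add_sub_cancel]
  · simp_rw [mul_assoc, ratBinom_pow_mul_sum_choose_even hm ha, hu,
      mul_left_comm _ (2 ^ (m - 1) : ℚ)]
    rw [← mul_sum, sum_range_neg_one_pow_mul_succ_add v, hv0, hvn, Nat.add_sub_cancel, pow_succ]
    ring
end

section
/- Let p be an odd prime. Then: (i) ∑_{k=0}^{p−1} (4k+1) C(2k,k)/(−4)^k ≡ (3 − 2^p) p (mod p³); (ii) ∑_{k=0}^{p−1} (4k+1) C(2k,k)²/16^k ≡ ∑_{k=0}^{p−1} (8k²+4k+1) C(2k,k)²/(−16)^k ≡ (5 − 2^{p+1}) p² (mod p⁴); (iii) ∑_{k=0}^{p−1} (3(4k+1) + (4k+1)³) C(2k,k)³/(−64)^k ≡ ∑_{k=0}^{p−1} (1 + 3(4k+1)²) C(2k,k)³/64^k ≡ 4(7 − 6·2^{p−1}) p³ (mod p⁵); (iv)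 4 ∑_{k=0}^{p−1} ((4k+1) + (4k+1)³) C(2k,k)⁴/256^k ≡ ∑_{k=0}^{p−1} (1 + 6(4k+1)² + (4k+1)⁴) C(2k,k)⁴/(−256)^k ≡ 8(9 − 2^{p+2}) p⁴ (mod p⁶). -/
/-!
Each of the seven sums telescopes: its partial sums have the closed form
`c n^r C(2n,n)^r / (±4^r)^n`. At `n = p` the factor `p^r` reduces the claim to a congruence
modulo `p²` between integers, which follows from `C(2p,p) ≡ 2 (mod p²)` and from writing
`2^(p-1) = 1 + d` with `p ∣ d` (Fermat), so that `4^(rp) = 4^r (1 + d)^(2r) ≡ 4^r (1 + 2rd)`.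
-/

open Finset

theorem cast_choose_two_mul_succ (n : ℕ) :
    ((2 * (n + 1)).choose (n + 1) : ℚ) = 2 * (2 * n + 1) * (2 * n).choose n / (n + 1) := by
  have h := Nat.succ_mul_centralBinom_succ n
  simp only [Nat.centralBinom] at h
  rw [eq_div_iff (by positivity)]
  exact_mod_cast (mul_comm _ _).trans h

theorem sum_mul_choose_div_neg_four_pow (n : ℕ) :
    ∑ k ∈ range n, (4 * (k : ℚ) + 1) * ((2 * k).choose k : ℚ) / (-4 : ℚ) ^ k
      = -2 * n * ((2 * n).choose n : ℚ) / (-4) ^ n := by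
  induction n with
  | zero => simp
  | succ n ih =>
    rw [sum_range_succ, ih, cast_choose_two_mul_succ]
    push_cast
    field_simp
    ring

theorem sum_mul_choose_sq_div_sixteen_pow (n : ℕ) :
    ∑ k ∈ range n, (4 * (k : ℚ) + 1) * ((2 * k).choose k : ℚ) ^ 2 / (16 : ℚ) ^ k
      = 4 * n ^ 2 * ((2 * n).choose n : ℚ) ^ 2 / 16 ^ n := by
  induction n with
  | zero => simp
  | succ n ih =>
    rw [sum_range_succ, ih, cast_choose_two_mul_succ]
    push_cast
    field_simp
    ring

theorem sum_mul_choose_sq_div_neg_sixteen_pow (n : ℕ) :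
    ∑ k ∈ range n,
        (8 * (k : ℚ) ^ 2 + 4 * k + 1) * ((2 * k).choose k : ℚ) ^ 2 / (-16 : ℚ) ^ k
      = -4 * n ^ 2 * ((2 * n).choose n : ℚ) ^ 2 / (-16) ^ n := by
  induction n with
  | zero => simp
  | succ n ih =>
    rw [sum_range_succ, ih, cast_choose_two_mul_succ]
    push_cast
    field_simp
    ring

theorem sum_mul_choose_cube_div_neg_sixtyFour_pow (n : ℕ) :
    ∑ k ∈ range n, (3 * (4 * (k : ℚ) + 1) + (4 * (k : ℚ) + 1) ^ 3) *
        ((2 * k).choose k : ℚ) ^ 3 / (-64 : ℚ) ^ k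
      = -32 * n ^ 3 * ((2 * n).choose n : ℚ) ^ 3 / (-64) ^ n := by
  induction n with
  | zero => simp
  | succ n ih =>
    rw [sum_range_succ, ih, cast_choose_two_mul_succ]
    push_cast
    field_simp
    ring

theorem sum_mul_choose_cube_div_sixtyFour_pow (n : ℕ) :
    ∑ k ∈ range n,
        (1 + 3 * (4 * (k : ℚ) + 1) ^ 2) * ((2 * k).choose k : ℚ) ^ 3 / (64 : ℚ) ^ k
      = 32 * n ^ 3 * ((2 * n).choose n : ℚ) ^ 3 / 64 ^ n := by
  induction n with
  | zero => simp
  | succ n ih =>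
    rw [sum_range_succ, ih, cast_choose_two_mul_succ]
    push_cast
    field_simp
    ring

theorem sum_mul_choose_pow_four_div_twoHundredFiftySix_pow (n : ℕ) :
    ∑ k ∈ range n, ((4 * (k : ℚ) + 1) + (4 * (k : ℚ) + 1) ^ 3) *
        ((2 * k).choose k : ℚ) ^ 4 / (256 : ℚ) ^ k
      = 32 * n ^ 4 * ((2 * n).choose n : ℚ) ^ 4 / 256 ^ n := by
  induction n with
  | zero => simp
  | succ n ih =>
    rw [sum_range_succ, ih, cast_choose_two_mul_succ]
    push_cast
    field_simp
    ring

theorem sum_mul_choose_pow_four_div_neg_twoHundredFiftySix_pow (n : ℕ) :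
    ∑ k ∈ range n, (1 + 6 * (4 * (k : ℚ) + 1) ^ 2 + (4 * (k : ℚ) + 1) ^ 4) *
        ((2 * k).choose k : ℚ) ^ 4 / (-256 : ℚ) ^ k
      = -128 * n ^ 4 * ((2 * n).choose n : ℚ) ^ 4 / (-256) ^ n := by
  induction n with
  | zero => simp
  | succ n ih =>
    rw [sum_range_succ, ih, cast_choose_two_mul_succ]
    push_cast
    field_simp
    ring

theorem isPInt_intCast_div_natCast {p : ℕ} (hp : p.Prime) (a : ℤ) {b : ℕ} (hb : p.Coprime b) :
    isPInt p (a / b) := by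
  intro hden
  have hdvd : ((a / b : ℚ).den : ℤ) ∣ b := by
    simpa [Rat.divInt_eq_div] using Rat.den_dvd a b
  exact hp.coprime_iff_not_dvd.1 hb
    (Int.natCast_dvd_natCast.1 ((Int.natCast_dvd_natCast.2 hden).trans hdvd))

theorem ratModEq_div_of_dvd_sub {p m : ℕ} (hp : p.Prime) {a c : ℤ} {b : ℕ} (hb : p.Coprime b)
    (h : (p : ℤ) ^ m ∣ a - c) : ratModEq p m (a / b) (c / b) := by
  obtain ⟨N, hN⟩ := h
  have hN' : (a : ℚ) - c = p ^ m * N := by exact_mod_cast hN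
  have hp0 : (p : ℚ) ≠ 0 := Nat.cast_ne_zero.2 hp.ne_zero
  have e : ((a : ℚ) / b - c / b) / p ^ m = N / b := by
    rw [div_sub_div_same, hN']
    field_simp
  rw [ratModEq, e]
  exact isPInt_intCast_div_natCast hp N hb

theorem sq_dvd_one_sub_mul_mul_one_add_pow_sub_one {R : Type*} [CommRing R] (d : R) (n : ℕ) :
    d ^ 2 ∣ (1 - n * d) * (1 + d) ^ n - 1 := by
  have h := sq_dvd_add_pow_sub_sub d 1 n
  simp only [one_pow, one_mul] at h
  rw [show (1 - n * d) * (1 + d) ^ n - 1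
      = (1 - n * d) * ((1 + d) ^ n - d * n - 1) + d ^ 2 * -(n : R) ^ 2 by ring]
  exact dvd_add (h.mul_left _) (dvd_mul_right _ _)

theorem sq_dvd_choose_two_mul_self_sub_two {p : ℕ} (hp : p.Prime) :
    (p : ℤ) ^ 2 ∣ ((2 * p).choose p : ℤ) - 2 := by
  obtain ⟨q, rfl⟩ : ∃ q, p = q + 1 := ⟨p - 1, (Nat.succ_pred_eq_of_pos hp.pos).symm⟩
  rw [← Nat.sum_range_choose_sq]
  push_cast
  rw [sum_range_succ, sum_range_succ', Nat.choose_zero_right, Nat.choose_self,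
    Nat.cast_one, one_pow, add_assoc, one_add_one_eq_two, add_sub_cancel_right]
  refine dvd_sum fun i hi => ?_
  have hi : i + 1 < q + 1 := by simpa using hi
  exact_mod_cast pow_dvd_pow_of_dvd
    (Int.natCast_dvd_natCast.2 (hp.dvd_choose_self (Nat.succ_ne_zero i) hi)) 2

theorem sq_dvd_two_pow_mul_choose_pow_sub {p : ℕ} (hp : p.Prime) (hp2 : p ≠ 2) (r : ℕ) :
    (p : ℤ) ^ 2 ∣
      2 ^ r * ((2 * p).choose p : ℤ) ^ r - (1 - r * (2 ^ p - 2)) * ((4 : ℤ) ^ r) ^ p := by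
  set C : ℤ := ((2 * p).choose p : ℤ)
  set d : ℤ := 2 ^ (p - 1) - 1 with hd_def
  have hd : (p : ℤ) ∣ d := Int.prime_dvd_pow_sub_one hp
    (Nat.isCoprime_iff_coprime.2 ((Nat.coprime_primes Nat.prime_two hp).2 (Ne.symm hp2)))
  have h2p : (2 : ℤ) ^ p = 2 * (1 + d) := by
    rw [show 1 + d = 2 ^ (p - 1) by rw [hd_def]; ring, ← pow_succ', Nat.sub_add_cancel hp.one_le]
  have h4p : ((4 : ℤ) ^ r) ^ p = 4 ^ r * (1 + d) ^ (2 * r) := by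
    rw [← pow_mul, mul_comm, pow_mul, show (4 : ℤ) ^ p = (2 ^ p) ^ 2 by
      rw [← pow_mul, mul_comm, pow_mul]; norm_num, h2p]
    ring
  rw [h4p, h2p, show 2 ^ r * C ^ r - (1 - r * (2 * (1 + d) - 2)) * (4 ^ r * (1 + d) ^ (2 * r))
      = ((2 * C) ^ r - 4 ^ r) - 4 ^ r * ((1 - ((2 * r : ℕ) : ℤ) * d) * (1 + d) ^ (2 * r) - 1) by
    push_cast; ring]
  have hC : (p : ℤ) ^ 2 ∣ 2 * C - 4 := by
    rw [show 2 * C - 4 = 2 * (C - 2) by ring]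
    exact dvd_mul_of_dvd_right (sq_dvd_choose_two_mul_self_sub_two hp) 2
  refine dvd_sub (hC.trans (sub_dvd_pow_sub_pow _ _ r)) ?_
  exact ((pow_dvd_pow_of_dvd hd 2).trans
    (sq_dvd_one_sub_mul_mul_one_add_pow_sub_one d _)).mul_left _

theorem ratModEq_mul_choose_pow_div {p : ℕ} (hp : p.Prime) (hp2 : p ≠ 2) (r : ℕ) (K : ℤ) :
    ratModEq p (r + 2) (K * 2 ^ r * p ^ r * ((2 * p).choose p : ℚ) ^ r / ((4 : ℚ) ^ r) ^ p)
      (K * (1 - r * (2 ^ p - 2)) * p ^ r) := by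
  have hb : p.Coprime ((4 ^ r) ^ p) :=
    (((Nat.coprime_primes hp Nat.prime_two).2 hp2).pow_right 2).pow_right r |>.pow_right p
  have hdvd : (p : ℤ) ^ (r + 2) ∣ K * 2 ^ r * p ^ r * ((2 * p).choose p : ℤ) ^ r
      - K * (1 - r * (2 ^ p - 2)) * p ^ r * ((4 : ℤ) ^ r) ^ p := by
    rw [pow_add, show K * 2 ^ r * p ^ r * ((2 * p).choose p : ℤ) ^ r
        - K * (1 - r * (2 ^ p - 2)) * p ^ r * ((4 : ℤ) ^ r) ^ p
        = p ^ r * (K * (2 ^ r * ((2 * p).choose p : ℤ) ^ r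
          - (1 - r * (2 ^ p - 2)) * ((4 : ℤ) ^ r) ^ p)) by ring]
    exact mul_dvd_mul_left _ ((sq_dvd_two_pow_mul_choose_pow_sub hp hp2 r).mul_left K)
  convert ratModEq_div_of_dvd_sub hp hb hdvd using 1 <;> push_cast
  · rfl
  · rw [mul_div_cancel_right₀ _ (by positivity)]

theorem stmt2 (p : ℕ) (hp : p.Prime) (hp2 : p ≠ 2) :
    ratModEq p 3
      (∑ k ∈ Finset.range p, (4 * (k : ℚ) + 1) * ((2 * k).choose k : ℚ) / (-4 : ℚ) ^ k)
      ((3 - 2 ^ p) * p) ∧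
    ratModEq p 4
      (∑ k ∈ Finset.range p, (4 * (k : ℚ) + 1) * ((2 * k).choose k : ℚ) ^ 2 / (16 : ℚ) ^ k)
      ((5 - 2 ^ (p + 1)) * p ^ 2) ∧
    ratModEq p 4
      (∑ k ∈ Finset.range p,
        (8 * (k : ℚ) ^ 2 + 4 * k + 1) * ((2 * k).choose k : ℚ) ^ 2 / (-16 : ℚ) ^ k)
      ((5 - 2 ^ (p + 1)) * p ^ 2) ∧
    ratModEq p 5
      (∑ k ∈ Finset.range p,
        (3 * (4 * (k : ℚ) + 1) + (4 * (k : ℚ) + 1) ^ 3) * ((2 * k).choose k : ℚ) ^ 3 /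
          (-64 : ℚ) ^ k)
      (4 * (7 - 6 * 2 ^ (p - 1)) * p ^ 3) ∧
    ratModEq p 5
      (∑ k ∈ Finset.range p,
        (1 + 3 * (4 * (k : ℚ) + 1) ^ 2) * ((2 * k).choose k : ℚ) ^ 3 / (64 : ℚ) ^ k)
      (4 * (7 - 6 * 2 ^ (p - 1)) * p ^ 3) ∧
    ratModEq p 6
      (4 * ∑ k ∈ Finset.range p,
        ((4 * (k : ℚ) + 1) + (4 * (k : ℚ) + 1) ^ 3) * ((2 * k).choose k : ℚ) ^ 4 / (256 : ℚ) ^ k)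
      (8 * (9 - 2 ^ (p + 2)) * p ^ 4) ∧
    ratModEq p 6
      (∑ k ∈ Finset.range p,
        (1 + 6 * (4 * (k : ℚ) + 1) ^ 2 + (4 * (k : ℚ) + 1) ^ 4) * ((2 * k).choose k : ℚ) ^ 4 /
          (-256 : ℚ) ^ k)
      (8 * (9 - 2 ^ (p + 2)) * p ^ 4) := by
  have hodd : Odd p := hp.odd_of_ne_two hp2
  have h2p : (2 : ℚ) ^ p = 2 * 2 ^ (p - 1) := by rw [← pow_succ', Nat.sub_add_cancel hp.one_le]
  refine ⟨?_, ?_, ?_, ?_, ?_, ?_, ?_⟩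
  · rw [sum_mul_choose_div_neg_four_pow, hodd.neg_pow]
    convert ratModEq_mul_choose_pow_div hp hp2 1 1 using 1 <;> push_cast <;> ring
  · rw [sum_mul_choose_sq_div_sixteen_pow]
    convert ratModEq_mul_choose_pow_div hp hp2 2 1 using 1 <;> push_cast <;> ring
  · rw [sum_mul_choose_sq_div_neg_sixteen_pow, hodd.neg_pow]
    convert ratModEq_mul_choose_pow_div hp hp2 2 1 using 1 <;> push_cast <;> ring
  · rw [sum_mul_choose_cube_div_neg_sixtyFour_pow, hodd.neg_pow]
    convert ratModEq_mul_choose_pow_div hp hp2 3 4 using 1 <;> push_cast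
    · ring
    · rw [h2p]
      ring
  · rw [sum_mul_choose_cube_div_sixtyFour_pow]
    convert ratModEq_mul_choose_pow_div hp hp2 3 4 using 1 <;> push_cast
    · ring
    · rw [h2p]
      ring
  · rw [sum_mul_choose_pow_four_div_twoHundredFiftySix_pow]
    convert ratModEq_mul_choose_pow_div hp hp2 4 8 using 1 <;> push_cast <;> ring
  · rw [sum_mul_choose_pow_four_div_neg_twoHundredFiftySix_pow, hodd.neg_pow]
    convert ratModEq_mul_choose_pow_div hp hp2 4 8 using 1 <;> push_cast <;> ring
end

section
/- Let p be an odd prime and let a ∈ ℤ_p with a ≢ −1 (mod p). Define C_p(a) = ∑_{k=0}^{p−1} (a − 2k) binom(a,k)³. Then C_p(a) + C_p(a+1) ≡ 2(a − ⟨a⟩_p)³ / (⟨a⟩_p + 1)² (mod p⁴). -/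
/-!
Write `B_a(k)` for `binom(a, k)` and `C_m(a) = ∑_{k<m} (a - 2k) B_a(k)³`. Pascal's rule
`B_{a+1}(k+1) = B_a(k+1) + B_a(k)` and `(k+1) B_a(k+1) = (a-k) B_a(k)` make the sum telescope:
`C_m(a) + C_m(a+1) = (2a + 2 - m) B_a(m-1)³` for `m ≥ 1`.
For `m = p` and `a ≡ n (mod p)` with `n < p - 1`, the factor `a - n` of `B_a(p-1)` is divisible
by `p`, so its cube vanishes modulo `p³` and the rest of `(2a + 2 - p) B_a(p-1)³` only matters
modulo `p`. There `2a + 2 - p ≡ 2(n+1)` and, by Wilson's theorem,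
`B_a(p-1) / (a-n) = ∏_{i<p-1, i≠n} (a-i) / (p-1)! ≡ 1/(n+1)`.
-/
open Finset Nat

def binomCubeSum (m : ℕ) (a : ℚ) : ℚ :=
  ∑ k ∈ range m, (a - 2 * k) * ratBinom a k ^ 3

theorem ratBinom_zero (a : ℚ) : ratBinom a 0 = 1 := by
  simp [ratBinom]

theorem ratBinom_succ_mul (a : ℚ) (k : ℕ) :
    ratBinom a (k + 1) * (k + 1) = ratBinom a k * (a - k) := by
  simp only [ratBinom, prod_range_succ, factorial_succ]
  push_cast
  field_simp

theorem ratBinom_add_one_succ (a : ℚ) (k : ℕ) :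
    ratBinom (a + 1) (k + 1) = ratBinom a (k + 1) + ratBinom a k := by
  have hshift : ∏ i ∈ range (k + 1), (a + 1 - i) = (a + 1) * ∏ i ∈ range k, (a - i) := by
    rw [prod_range_succ', mul_comm]
    push_cast
    simp only [add_sub_add_right_eq_sub, sub_zero]
  simp only [ratBinom, hshift, prod_range_succ, factorial_succ]
  push_cast
  field_simp
  ring

theorem binomCubeSum_succ_add_binomCubeSum_succ (a : ℚ) (m : ℕ) :
    binomCubeSum (m + 1) a + binomCubeSum (m + 1) (a + 1) = (2 * a + 1 - m) * ratBinom a m ^ 3 := by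
  induction m with
  | zero => simp [binomCubeSum, ratBinom_zero]; ring
  | succ m ih =>
    rw [binomCubeSum, binomCubeSum, sum_range_succ, sum_range_succ _ (m + 1), add_add_add_comm,
      ← binomCubeSum, ← binomCubeSum, ih, ratBinom_add_one_succ]
    push_cast
    linear_combination -(3 * ratBinom a m ^ 2 + 3 * ratBinom a m * ratBinom a (m + 1)
      + 3 * ratBinom a (m + 1) ^ 2) * ratBinom_succ_mul a m

namespace ZMod

variable {p : ℕ} [Fact p.Prime]

theorem prod_range_erase_natCast_sub {n : ℕ} (hn : n < p) :
    ∏ i ∈ (range p).erase n, ((n : ZMod p) - i) = -1 := by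
  rw [← prod_Ico_one_prime p]
  refine prod_nbij' (fun i => ((n - i : ZMod p)).val) (fun j => ((n - j : ZMod p)).val)
    ?_ ?_ ?_ ?_ ?_
  · intro i hi
    rw [mem_erase, mem_range] at hi
    rw [mem_Ico, one_le_iff_ne_zero, ne_eq, val_eq_zero, sub_eq_zero]
    refine ⟨?_, val_lt _⟩
    rw [natCast_eq_natCast_iff', Nat.mod_eq_of_lt hn, Nat.mod_eq_of_lt hi.2]
    exact fun h => hi.1 h.symm
  · intro j hj
    rw [mem_Ico] at hj
    rw [mem_erase, mem_range]
    refine ⟨fun h => ?_, val_lt _⟩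
    have hj0 : (j : ZMod p) = 0 := by simpa using congrArg ((↑) : ℕ → ZMod p) h
    rw [natCast_eq_zero_iff] at hj0
    exact not_dvd_of_pos_of_lt hj.1 hj.2 hj0
  · intro i hi
    rw [mem_erase, mem_range] at hi
    simp [val_cast_of_lt hi.2]
  · intro j hj
    rw [mem_Ico] at hj
    simp [val_cast_of_lt hj.2]
  · intro i _
    simp

theorem succ_mul_prod_range_pred_erase_natCast_sub {n : ℕ} (hn : n + 1 < p) :
    ((n : ZMod p) + 1) * ∏ i ∈ (range (p - 1)).erase n, ((n : ZMod p) - i) = -1 := by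
  have hrange : range p = insert (p - 1) (range (p - 1)) := by
    rw [← range_add_one, Nat.sub_add_cancel (by omega)]
  have hlast : ((n : ZMod p) - ((p - 1 : ℕ) : ZMod p)) = n + 1 := by
    rw [Nat.cast_sub (by omega), natCast_self]
    ring
  rw [← prod_range_erase_natCast_sub (p := p) (by omega : n < p), hrange,
    erase_insert_of_ne (by omega), prod_insert (by simp), hlast]

end ZMod

namespace PadicInt

variable {p : ℕ} [Fact p.Prime]

@[norm_cast]
theorem coe_finsetProd {ι : Type*} (s : Finset ι) (f : ι → ℤ_[p]) :
    ((∏ i ∈ s, f i : ℤ_[p]) : ℚ_[p]) = ∏ i ∈ s, (f i : ℚ_[p]) :=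
  map_prod Coe.ringHom f s

theorem toZMod_eq_zero_iff_norm_lt_one (x : ℤ_[p]) : toZMod x = 0 ↔ ‖x‖ < 1 := by
  rw [← RingHom.mem_ker, ker_toZMod, IsLocalRing.mem_maximalIdeal, mem_nonunits]

theorem norm_le_inv_of_toZMod_eq_zero {x : ℤ_[p]} (hx : toZMod x = 0) :
    ‖x‖ ≤ (p : ℝ)⁻¹ := by
  have := (norm_le_pow_iff_norm_lt_pow_add_one x (-1)).2
  rw [zpow_neg_one, neg_add_cancel, zpow_zero] at this
  exact this ((toZMod_eq_zero_iff_norm_lt_one x).1 hx)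

theorem toZMod_two_add_mul_prod_cube {n : ℕ} (hn : n + 1 < p) {α : ℤ_[p]}
    (hα : toZMod α = n) :
    toZMod ((2 * α + 2 - (p : ℤ_[p])) * (∏ i ∈ (range (p - 1)).erase n, (α - i)) ^ 3 *
      ((n : ℤ_[p]) + 1) ^ 2 - 2 * ((p - 1)! : ℤ_[p]) ^ 3) = 0 := by
  have hW := ZMod.succ_mul_prod_range_pred_erase_natCast_sub hn
  simp only [map_sub, map_mul, map_pow, map_add, map_prod, map_natCast, map_ofNat, map_one, hα,
    ZMod.natCast_self, ZMod.wilsons_lemma]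
  set W := ((n : ZMod p) + 1) * ∏ i ∈ (range (p - 1)).erase n, ((n : ZMod p) - i)
  linear_combination 2 * (W ^ 2 - W + 1) * hW

end PadicInt

section Congruences

variable {p : ℕ} [Fact p.Prime]

theorem isPInt.add {x y : ℚ} (hx : isPInt p x) (hy : isPInt p y) : isPInt p (x + y) :=
  fun h => ((Fact.out : p.Prime).dvd_mul.mp (h.trans (Rat.add_den_dvd x y))).elim hx hy

theorem ratModEq.trans {m : ℕ} {x y z : ℚ} (hxy : ratModEq p m x y) (hyz : ratModEq p m y z) :
    ratModEq p m x z := by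
  rw [ratModEq, show (x - z) / (p : ℚ) ^ m = (x - y) / (p : ℚ) ^ m + (y - z) / (p : ℚ) ^ m by
    ring]
  exact hxy.add hyz

theorem isPInt_iff_norm_le_one (x : ℚ) : isPInt p x ↔ ‖(x : ℚ_[p])‖ ≤ 1 := by
  rw [Padic.norm_rat_le_one_iff_padicValuation_le_one, Rat.padicValuation_le_one_iff]
  rfl

theorem ratModEq_iff_norm_sub_le (m : ℕ) (x y : ℚ) :
    ratModEq p m x y ↔ ‖(x : ℚ_[p]) - y‖ ≤ (p : ℝ)⁻¹ ^ m := by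
  rw [ratModEq, isPInt_iff_norm_le_one]
  push_cast
  have hpos : (0 : ℝ) < (p : ℝ)⁻¹ ^ m :=
    pow_pos (inv_pos.2 (mod_cast (Fact.out : p.Prime).pos)) m
  rw [norm_div, norm_pow, Padic.norm_p, div_le_one hpos]

theorem ratModEq_two_add_mul_prod_cube {a : ℚ} (ha : isPInt p a) {n : ℕ} (hn : n + 1 < p)
    (han : ratModEq p 1 a n) :
    ratModEq p 1 ((2 * a + 2 - p) * (∏ i ∈ (range (p - 1)).erase n, (a - i)) ^ 3 * (n + 1) ^ 2)
      (2 * ((p - 1)! : ℚ) ^ 3) := by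
  set α : ℤ_[p] := ⟨a, (isPInt_iff_norm_le_one a).1 ha⟩
  have hαa : (α : ℚ_[p]) = a := rfl
  rw [ratModEq_iff_norm_sub_le, pow_one] at han ⊢
  have hαn : PadicInt.toZMod α = n := by
    rw [← sub_eq_zero, ← map_natCast PadicInt.toZMod n, ← map_sub,
      PadicInt.toZMod_eq_zero_iff_norm_lt_one, PadicInt.norm_def]
    push_cast [hαa]
    exact han.trans_lt (inv_lt_one_of_one_lt₀ (mod_cast (Fact.out : p.Prime).one_lt))
  have := PadicInt.norm_le_inv_of_toZMod_eq_zero (PadicInt.toZMod_two_add_mul_prod_cube hn hαn)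
  rw [PadicInt.norm_def] at this
  push_cast [hαa] at this ⊢
  exact this

theorem ratModEq_two_add_mul_ratBinom_pred_cube {a : ℚ} (ha : isPInt p a) {n : ℕ}
    (hn : n + 1 < p) (han : ratModEq p 1 a n) :
    ratModEq p 4 ((2 * a + 2 - p) * ratBinom a (p - 1) ^ 3)
      (2 * (a - n) ^ 3 / ((n : ℚ) + 1) ^ 2) := by
  have hp : p.Prime := Fact.out
  have hE := ratModEq_two_add_mul_prod_cube ha hn han
  set Q := ∏ i ∈ (range (p - 1)).erase n, (a - i)
  have hB : ratBinom a (p - 1) = (a - n) * Q / ((p - 1)! : ℚ) := by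
    rw [ratBinom, ← mul_prod_erase _ _ (mem_range.2 (by omega : n < p - 1))]
  have hdiff : (2 * a + 2 - p) * ratBinom a (p - 1) ^ 3 - 2 * (a - n) ^ 3 / ((n : ℚ) + 1) ^ 2 =
      (a - n) ^ 3 * ((2 * a + 2 - p) * Q ^ 3 * (n + 1) ^ 2 - 2 * ((p - 1)! : ℚ) ^ 3) /
        (((p - 1)! : ℚ) ^ 3 * ((n : ℚ) + 1) ^ 2) := by
    rw [hB]
    field_simp
  have hfact : ‖(((p - 1)! : ℕ) : ℚ_[p])‖ = 1 :=
    Padic.norm_natCast_eq_one_iff.2 (hp.coprime_factorial_of_lt (by omega))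
  have hsucc : ‖((n + 1 : ℕ) : ℚ_[p])‖ = 1 :=
    Padic.norm_natCast_eq_one_iff.2 (coprime_of_lt_prime (by omega) hn hp)
  rw [ratModEq_iff_norm_sub_le] at han hE ⊢
  push_cast at hfact hsucc han
  calc ‖(((2 * a + 2 - p) * ratBinom a (p - 1) ^ 3 : ℚ) : ℚ_[p]) -
        ((2 * (a - n) ^ 3 / ((n : ℚ) + 1) ^ 2 : ℚ) : ℚ_[p])‖
      = ‖(a : ℚ_[p]) - n‖ ^ 3 * ‖(((2 * a + 2 - p) * Q ^ 3 * (n + 1) ^ 2 : ℚ) : ℚ_[p]) -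
          ((2 * ((p - 1)! : ℚ) ^ 3 : ℚ) : ℚ_[p])‖ := by
        rw [← Rat.cast_sub, hdiff]
        push_cast
        rw [norm_div, norm_mul, norm_mul, norm_pow, norm_pow, norm_pow, hfact, hsucc]
        simp
    _ ≤ ((p : ℝ)⁻¹ ^ 1) ^ 3 * (p : ℝ)⁻¹ ^ 1 := by gcongr
    _ = (p : ℝ)⁻¹ ^ 4 := by ring

end Congruences

theorem stmt10_general (p : ℕ) (hp : p.Prime)
    (a : ℚ) (hap : isPInt p a) (ha1 : ¬ ratModEq p 1 a (-1))
    (n : ℕ) (hnp : n < p) (han : ratModEq p 1 a (n : ℚ)) :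
    ratModEq p 4
      ((∑ k ∈ Finset.range p, (a - 2 * k) * ratBinom a k ^ 3) +
        ∑ k ∈ Finset.range p, ((a + 1) - 2 * k) * ratBinom (a + 1) k ^ 3)
      (2 * (a - n) ^ 3 / ((n : ℚ) + 1) ^ 2) := by
  have := Fact.mk hp
  have hn : n + 1 < p := by
    refine lt_of_le_of_ne hnp fun hnp1 => ha1 (han.trans ?_)
    rw [ratModEq, show ((n : ℚ) - -1) / (p : ℚ) ^ 1 = 1 by
      rw [← hnp1]; push_cast; field_simp; ring]
    exact hp.one_lt.ne' ∘ Nat.eq_one_of_dvd_one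
  have hsum := binomCubeSum_succ_add_binomCubeSum_succ a (p - 1)
  rw [Nat.sub_add_cancel hp.one_le, Nat.cast_pred hp.pos,
    show 2 * a + 1 - ((p : ℚ) - 1) = 2 * a + 2 - p by ring] at hsum
  show ratModEq p 4 (binomCubeSum p a + binomCubeSum p (a + 1)) _
  rw [hsum]
  exact ratModEq_two_add_mul_ratBinom_pred_cube hap hn han

theorem stmt10 (p : ℕ) (hp : p.Prime) (hp2 : p ≠ 2)
    (a : ℚ) (hap : isPInt p a) (ha1 : ¬ ratModEq p 1 a (-1))
    (n : ℕ) (hnp : n < p) (han : ratModEq p 1 a (n : ℚ)) :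
    ratModEq p 4
      ((∑ k ∈ Finset.range p, (a - 2 * k) * ratBinom a k ^ 3) +
        ∑ k ∈ Finset.range p, ((a + 1) - 2 * k) * ratBinom (a + 1) k ^ 3)
      (2 * (a - n) ^ 3 / ((n : ℚ) + 1) ^ 2) :=
  stmt10_general p hp a hap ha1 n hnp han
end

section
/- Let p be an odd prime. Then ∑_{k=0}^{(p−1)/2} (4k+3) C_k⁴ / 256^k ≡ 16 (mod p⁴), where C_k = C(2k,k)/(k+1) is the k-th Catalan number. -/
/-!
The summand telescopes: with `a N = 16 (8N² + 4N + 1) C(2N,N)⁴ / 256^N`, the partial sum over `k < N`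
equals `16 - a N`. For `N = (p+1)/2` the central binomial coefficient `C(p+1, (p+1)/2)` is divisible
by `p`, so `a N` is `p⁴` times a rational whose denominator is a power of `2`.
-/

theorem sum_range_catalan_pow_four_div_pow (N : ℕ) :
    ∑ k ∈ Finset.range N,
        (4 * (k : ℚ) + 3) * (((2 * k).choose k : ℚ) / ((k : ℚ) + 1)) ^ 4 / (256 : ℚ) ^ k
      = 16 - 16 * (8 * (N : ℚ) ^ 2 + 4 * N + 1) * ((2 * N).choose N : ℚ) ^ 4 / 256 ^ N := by
  induction N with
  | zero => simp
  | succ n ih =>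
    rw [Finset.sum_range_succ, ih]
    have hrec : ((n : ℚ) + 1) * ((2 * (n + 1)).choose (n + 1) : ℚ)
        = 2 * (2 * n + 1) * ((2 * n).choose n : ℚ) := by
      exact_mod_cast Nat.succ_mul_centralBinom_succ n
    have hC : ((2 * (n + 1)).choose (n + 1) : ℚ) = 2 * (2 * n + 1) * ((2 * n).choose n : ℚ) / (n + 1) := by
      rw [← hrec]; field_simp
    push_cast [hC]
    field_simp
    ring

theorem Nat.Prime.dvd_choose_succ_self {p k : ℕ} (hp : p.Prime) (hk : 1 < k) (hkp : k < p) :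
    p ∣ (p + 1).choose k := by
  obtain ⟨j, rfl⟩ : ∃ j, k = j + 1 := ⟨k - 1, by omega⟩
  rw [Nat.choose_succ_succ]
  exact dvd_add (hp.dvd_choose_self (by omega) (by omega)) (hp.dvd_choose_self (by omega) hkp)

theorem isPInt_intCast_div {p : ℕ} (a b : ℤ) (hb : ¬ (p : ℤ) ∣ b) : isPInt p (a / b) := by
  intro hden
  rw [← Rat.divInt_eq_div] at hden
  exact hb ((Int.natCast_dvd_natCast.mpr hden).trans (Rat.den_dvd a b))

theorem isPInt_intCast_div_two_pow {p : ℕ} (hp : p.Prime) (hp2 : p ≠ 2) (a : ℤ) (n : ℕ) :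
    isPInt p (a / 2 ^ n) := by
  have h := isPInt_intCast_div (p := p) a (2 ^ n) fun h ↦ hp2 <|
    (Nat.prime_dvd_prime_iff_eq hp Nat.prime_two).mp (hp.dvd_of_dvd_pow (by exact_mod_cast h))
  exact_mod_cast h

theorem stmt13 (p : ℕ) (hp : p.Prime) (hp2 : p ≠ 2) :
    ratModEq p 4
      (∑ k ∈ Finset.range ((p - 1) / 2 + 1),
        (4 * (k : ℚ) + 3) * (((2 * k).choose k : ℚ) / ((k : ℚ) + 1)) ^ 4 / (256 : ℚ) ^ k)
      16 := by
  set N := (p - 1) / 2 + 1 with hN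
  have hp3 : 3 ≤ p := by have := hp.two_le; omega
  have h2N : 2 * N = p + 1 := by have := hp.odd_of_ne_two hp2; grind
  obtain ⟨t, ht⟩ : p ∣ (2 * N).choose N := by
    rw [h2N]; exact hp.dvd_choose_succ_self (by omega) (by omega)
  unfold ratModEq
  convert isPInt_intCast_div_two_pow hp hp2 (-16 * (8 * N ^ 2 + 4 * N + 1) * t ^ 4) (8 * N) using 1
  rw [sum_range_catalan_pow_four_div_pow, ht, pow_mul]
  push_cast
  field_simp
  ring
end
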